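/- arXiv:0707.0115 — 4 statements merged into one kernel-verified Lean document; each statement's English description precedes it below -/
import Mathlib

section
/- Let x_1, ..., x_{n+1} be pairwise distinct elements of a field and m ≥ n. Then the sum over all tuples (i_1, ..., i_{n+1}) of nonnegative integers with i_1 + ... + i_{n+1} = m - n of x_1^{i_1} x_2^{i_2} ⋯ x_{n+1}^{i_{n+1}} equals ∑_{i=1}^{n+1} x_i^m / ∏_{j ≠ i} (x_i - x_j). -/
/-!
Write `h_k(s)` for the complete homogeneous polynomial of degree `k` in the `v i`, `i ∈ s`, and
`D_m(s)` for the divided difference `∑ i ∈ s, v i ^ m / ∏ j ∈ s.erase i, (v i - v j)` of `X ^ m`.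
Adding a node `a` to `s`, both satisfy the same recursion
`F(insert a s)_{k+1} = v a * F(insert a s)_k + F(s)_{k+1}`: for `h` split off the exponent of
`v a`; for `D` write `v i ^ (m+1) = v a * v i ^ m + (v i - v a) * v i ^ m`, where the factor
`v i - v a` cancels node `a` from the denominator. The initial value `D_{#s-1}(s) = 1` is the
leading coefficient of the Lagrange interpolant of `X ^ (#s - 1)`.
-/

open Finset

namespace Finset

variable {ι R K : Type*} [DecidableEq ι]

def completeHomogeneous [CommSemiring R] (s : Finset ι) (v : ι → R) (k : ℕ) : R :=
  ∑ c ∈ s.piAntidiag k, ∏ i ∈ s, v i ^ c i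

def divDiffPow [Field K] (s : Finset ι) (v : ι → K) (m : ℕ) : K :=
  ∑ i ∈ s, v i ^ m / ∏ j ∈ s.erase i, (v i - v j)

section CommSemiring

variable [CommSemiring R] {s : Finset ι} {v : ι → R} {a : ι}

@[simp]
lemma completeHomogeneous_zero (s : Finset ι) (v : ι → R) : s.completeHomogeneous v 0 = 1 := by
  simp [completeHomogeneous]

@[simp]
lemma completeHomogeneous_empty_succ (v : ι → R) (k : ℕ) :
    (∅ : Finset ι).completeHomogeneous v (k + 1) = 0 := by
  simp [completeHomogeneous]

lemma completeHomogeneous_insert (ha : a ∉ s) (k : ℕ) :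
    (insert a s).completeHomogeneous v k
      = ∑ p ∈ antidiagonal k, v a ^ p.1 * s.completeHomogeneous v p.2 := by
  rw [← cons_eq_insert _ _ ha, completeHomogeneous, piAntidiag_cons, sum_disjiUnion]
  refine sum_congr rfl fun p _ => ?_
  rw [sum_map, completeHomogeneous, mul_sum]
  refine sum_congr rfl fun c hc => ?_
  have hca : c a = 0 := by
    by_contra h
    exact ha ((mem_piAntidiag.mp hc).2 a h)
  rw [prod_cons]
  simp only [addRightEmbedding_apply, Pi.add_apply, hca, zero_add]
  congr 1
  refine prod_congr rfl fun i hi => ?_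
  rw [if_neg (ne_of_mem_of_not_mem hi ha), add_zero]

lemma completeHomogeneous_insert_succ (ha : a ∉ s) (k : ℕ) :
    (insert a s).completeHomogeneous v (k + 1)
      = v a * (insert a s).completeHomogeneous v k + s.completeHomogeneous v (k + 1) := by
  rw [completeHomogeneous_insert ha, completeHomogeneous_insert ha, Nat.sum_antidiagonal_succ,
    mul_sum, add_comm]
  simp only [pow_succ', mul_assoc, pow_zero, one_mul]

end CommSemiring

section Field

variable [Field K] {s : Finset ι} {v : ι → K} {a : ι}

lemma divDiffPow_of_card_eq_succ (hvs : Set.InjOn v s) {k : ℕ} (hk : #s = k + 1) :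
    s.divDiffPow v k = 1 := by
  have hdeg : (Polynomial.X ^ k : Polynomial K).degree < #s := by
    rw [Polynomial.degree_X_pow, hk]; exact_mod_cast k.lt_succ_self
  have := Lagrange.coeff_eq_sum hvs hdeg
  simp only [hk, Nat.add_sub_cancel, Polynomial.coeff_X_pow_self, Polynomial.eval_pow,
    Polynomial.eval_X] at this
  exact this.symm

lemma divDiffPow_insert_succ (ha : a ∉ s) (hva : ∀ i ∈ s, v i ≠ v a) (m : ℕ) :
    (insert a s).divDiffPow v (m + 1)
      = v a * (insert a s).divDiffPow v m + s.divDiffPow v m := by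
  simp only [divDiffPow, sum_insert ha, erase_insert ha, mul_add, mul_sum]
  rw [add_assoc, ← sum_add_distrib]
  congr 1
  · rw [pow_succ', mul_div_assoc]
  refine sum_congr rfl fun i hi => ?_
  have hia : i ≠ a := ne_of_mem_of_not_mem hi ha
  have hsub : v i - v a ≠ 0 := sub_ne_zero.mpr (hva i hi)
  rw [erase_insert_of_ne hia.symm, prod_insert fun h => ha (mem_of_mem_erase h)]
  field_simp
  ring

theorem divDiffPow_eq_completeHomogeneous (hvs : Set.InjOn v s) {m : ℕ} (hm : #s ≤ m + 1) :
    s.divDiffPow v m = s.completeHomogeneous v (m + 1 - #s) := by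
  induction s using Finset.induction_on generalizing m with
  | empty =>
    simp [divDiffPow]
  | insert a s ha ih =>
    obtain ⟨hvs_s, hva⟩ := (Set.injOn_insert (mod_cast ha)).mp (coe_insert a s ▸ hvs)
    replace hva : ∀ i ∈ s, v i ≠ v a := fun i hi h => hva ⟨i, hi, h⟩
    obtain ⟨k, rfl⟩ : ∃ k, m = #s + k := ⟨m - #s, by rw [card_insert_of_notMem ha] at hm; omega⟩
    clear hm
    rw [card_insert_of_notMem ha, show #s + k + 1 - (#s + 1) = k by omega]
    induction k with
    | zero =>
      rw [completeHomogeneous_zero]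
      exact divDiffPow_of_card_eq_succ hvs (card_insert_of_notMem ha)
    | succ k ihk =>
      rw [← add_assoc, divDiffPow_insert_succ ha hva, ihk, completeHomogeneous_insert_succ ha,
        ih hvs_s (by omega), show #s + k + 1 - #s = k + 1 by omega]

end Field

end Finset

theorem stmt4 {K : Type*} [Field K] (n m : ℕ) (hmn : n ≤ m)
    (x : Fin (n + 1) → K) (hx : Function.Injective x) :
    ∑ c ∈ Finset.Nat.antidiagonalTuple (n + 1) (m - n), ∏ i, x i ^ c i
      = ∑ i, x i ^ m / ∏ j ∈ Finset.univ.erase i, (x i - x j) := by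
  have h := divDiffPow_eq_completeHomogeneous (s := univ) hx.injOn (m := m) (by simpa using hmn)
  rw [card_univ, Fintype.card_fin, Nat.add_sub_add_right] at h
  rw [← piAntidiag_univ_fin_eq_antidiagonalTuple]
  exact h.symm
end

section
/- For every natural number n, the number of integer pairs (I, J) with 0 ≤ I ≤ J ≤ n + 1 - I - J equals ⌊((n+4)^2 + 4)/12⌋. -/
/-!
Write `m = n + 1`. The pairs with `i ≤ j` and `i + 2 j = m` are exactly `(m - 2 j, j)` for
`⌈m / 3⌉ ≤ j ≤ ⌊m / 2⌋`, so adding the pairs with `i + 2 j = m` to those with `i + 2 j < m`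
increases the count by `⌊m / 2⌋ + 1 - ⌈m / 3⌉`. These increments sum to `m + 6` over any six
consecutive values of `m`, which is also the increment of `((m + 3) ^ 2 + 4) / 12` from `m` to
`m + 6`; the closed form then follows from the cases `m < 6`.
-/

open Finset

def pairsBelow (m : ℕ) : Finset (ℕ × ℕ) :=
  (range (m + 1) ×ˢ range (m + 1)).filter fun p => p.1 ≤ p.2 ∧ p.1 + 2 * p.2 ≤ m

def pairsOn (m : ℕ) : Finset (ℕ × ℕ) :=
  (range (m + 1) ×ˢ range (m + 1)).filter fun p => p.1 ≤ p.2 ∧ p.1 + 2 * p.2 = m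

theorem pairsOn_eq_image (m : ℕ) :
    pairsOn m = (Icc ((m + 2) / 3) (m / 2)).image fun j => (m - 2 * j, j) := by
  ext ⟨i, j⟩
  simp only [pairsOn, mem_filter, mem_product, mem_range, mem_image, mem_Icc, Prod.mk.injEq]
  constructor
  · rintro ⟨-, hij, hsum⟩
    exact ⟨j, by omega, by omega, rfl⟩
  · rintro ⟨j, hj, rfl, rfl⟩
    omega

theorem card_pairsOn (m : ℕ) : #(pairsOn m) = m / 2 + 1 - (m + 2) / 3 := by
  rw [pairsOn_eq_image, card_image_of_injective _ fun _ _ h => (Prod.mk.inj h).2, Nat.card_Icc]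

theorem card_pairsBelow_succ (m : ℕ) :
    #(pairsBelow (m + 1)) = #(pairsBelow m) + #(pairsOn (m + 1)) := by
  rw [← card_filter_add_card_filter_not fun p : ℕ × ℕ => p.1 + 2 * p.2 ≤ m]
  congr 2 <;> ext ⟨i, j⟩ <;>
    simp only [pairsBelow, pairsOn, mem_filter, mem_product, mem_range] <;> omega

theorem card_pairsBelow_add (m k : ℕ) :
    #(pairsBelow (m + k)) = #(pairsBelow m) + ∑ l ∈ range k, #(pairsOn (m + l + 1)) := by
  induction k with
  | zero => simp
  | succ k ih => rw [← add_assoc, card_pairsBelow_succ, ih, sum_range_succ, add_assoc]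

theorem card_pairsBelow_add_six (m : ℕ) :
    #(pairsBelow (m + 6)) = #(pairsBelow m) + (m + 6) := by
  simp only [card_pairsBelow_add, sum_range_succ, sum_range_zero, card_pairsOn]
  obtain ⟨q, r, hr, rfl⟩ : ∃ q r, r < 6 ∧ m = 6 * q + r := ⟨m / 6, m % 6, by omega, by omega⟩
  interval_cases r <;> omega

theorem card_pairsBelow : ∀ m, #(pairsBelow m) = ((m + 3) ^ 2 + 4) / 12
  | 0 | 1 | 2 | 3 | 4 | 5 => by decide
  | m + 6 => by
    have hsq : (m + 6 + 3) ^ 2 + 4 = (m + 3) ^ 2 + 4 + 12 * (m + 6) := by ring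
    rw [card_pairsBelow_add_six, card_pairsBelow m, hsq, Nat.add_mul_div_left _ _ (by norm_num)]

theorem stmt8 (n : ℕ) :
    ((Finset.range (n + 2) ×ˢ Finset.range (n + 2)).filter
        (fun p => p.1 ≤ p.2 ∧ p.1 + 2 * p.2 ≤ n + 1)).card
      = ((n + 4) ^ 2 + 4) / 12 :=
  card_pairsBelow (n + 1)
end

section
/- Let A be a real symmetric positive definite n × n matrix with spectral decomposition A = ∑_i α_i P_i (α_i > 0 distinct eigenvalues, P_i orthogonal spectral projectors with P_i P_j = δ_{ij} P_i and ∑ P_i = I). Then the linear map L on matrices defined by L(X) = ∑_{i,j} ((α_i - α_j)/(α_i^m - α_j^m)) P_i X P_j (with the convention that the coefficient is 1/(m α_i^{m-1}) when i = j) satisfies: for every matrix C, X = L(C) solves ∑_{k=1}^{m} A^{m-k} X A^{k-1} = C. -/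
/-!
Since `A ^ s * P i = α i ^ s • P i = P i * A ^ s`, the operator `X ↦ ∑ₖ A ^ (m - k) * X * A ^ (k - 1)`
acts on the block `P i * X * P j` as multiplication by `∑ₖ α i ^ (m - k) * α j ^ (k - 1)`, which is
`(α i ^ m - α j ^ m) / (α i - α j)` off the diagonal and `m * α i ^ (m - 1)` on it. The coefficients
defining `X` are the reciprocals of these numbers, and the blocks of `C` sum back to `C`.
-/

open Finset

section Scalar

variable {K : Type*}

theorem sum_Icc_pow_mul_pow_eq_geom_sum₂ [CommSemiring K] (x y : K) (m : ℕ) :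
    ∑ k ∈ Icc 1 m, x ^ (m - k) * y ^ (k - 1) = ∑ i ∈ range m, x ^ i * y ^ (m - 1 - i) := by
  rw [geom_sum₂_comm, ← Ico_add_one_right_eq_Icc, sum_Ico_eq_sum_range, add_tsub_cancel_right]
  refine sum_congr rfl fun i hi => ?_
  rw [mul_comm, add_tsub_cancel_left, show m - (1 + i) = m - 1 - i by omega]

theorem sum_Icc_pow_mul_pow_self [CommSemiring K] (x : K) (m : ℕ) :
    ∑ k ∈ Icc 1 m, x ^ (m - k) * x ^ (k - 1) = m * x ^ (m - 1) := by
  rw [sum_Icc_pow_mul_pow_eq_geom_sum₂, sum_congr rfl fun i hi => ?_, sum_const, card_range,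
    nsmul_eq_mul]
  rw [← pow_add]
  congr 1
  have := mem_range.mp hi
  omega

theorem sub_div_pow_sub_pow_mul_sum_Icc_pow_mul_pow [Field K] {x y : K} {m : ℕ} (h : x ^ m ≠ y ^ m) :
    (x - y) / (x ^ m - y ^ m) * ∑ k ∈ Icc 1 m, x ^ (m - k) * y ^ (k - 1) = 1 := by
  rw [sum_Icc_pow_mul_pow_eq_geom_sum₂, div_mul_eq_mul_div, mul_comm, geom_sum₂_mul,
    div_self (sub_ne_zero.mpr h)]

theorem one_div_mul_pow_mul_sum_Icc_pow_mul_pow [Field K] {x : K} {m : ℕ} (hm : (m : K) ≠ 0)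
    (hx : x ≠ 0) : 1 / (m * x ^ (m - 1)) * ∑ k ∈ Icc 1 m, x ^ (m - k) * x ^ (k - 1) = 1 := by
  rw [sum_Icc_pow_mul_pow_self, one_div_mul_cancel (mul_ne_zero hm (pow_ne_zero _ hx))]

end Scalar

section Spectral

variable {ι R M : Type*} [Fintype ι] [DecidableEq ι] [CommSemiring R] [Semiring M] [Algebra R M]
  {p : ι → M} {α : ι → R} {a : M}

theorem pow_mul_eq_smul_of_mul_eq_smul {q : M} {c : R} (h : a * q = c • q) (t : ℕ) :
    a ^ t * q = c ^ t • q := by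
  induction t with
  | zero => simp
  | succ t ih => rw [pow_succ, mul_assoc, h, mul_smul_comm, ih, smul_smul, pow_succ']

theorem mul_pow_eq_smul_of_mul_eq_smul {q : M} {c : R} (h : q * a = c • q) (t : ℕ) :
    q * a ^ t = c ^ t • q := by
  induction t with
  | zero => simp
  | succ t ih => rw [pow_succ', ← mul_assoc, h, smul_mul_assoc, ih, smul_smul, ← pow_succ']

variable (hp : ∀ i j, p i * p j = if i = j then p i else 0) (ha : a = ∑ j, α j • p j)
include hp ha

theorem mul_eq_smul_of_eq_sum_smul (i : ι) : a * p i = α i • p i := by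
  simp [ha, sum_mul, hp]

theorem eq_smul_mul_of_eq_sum_smul (i : ι) : p i * a = α i • p i := by
  simp [ha, mul_sum, hp]

theorem pow_mul_mul_mul_pow_of_eq_sum_smul (x : M) (s t : ℕ) (i j : ι) :
    a ^ s * (p i * x * p j) * a ^ t = (α i ^ s * α j ^ t) • (p i * x * p j) := by
  rw [show a ^ s * (p i * x * p j) * a ^ t = a ^ s * p i * x * (p j * a ^ t) by
      simp only [mul_assoc],
    pow_mul_eq_smul_of_mul_eq_smul (mul_eq_smul_of_eq_sum_smul hp ha i),
    mul_pow_eq_smul_of_mul_eq_smul (eq_smul_mul_of_eq_sum_smul hp ha j),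
    smul_mul_assoc, smul_mul_assoc, mul_smul_comm, smul_smul]

theorem sum_pow_mul_sum_smul_mul_pow_of_eq_sum_smul {κ : Type*} (S : Finset κ) (f g : κ → ℕ)
    (c : ι → ι → R) (x : M) :
    ∑ k ∈ S, a ^ f k * (∑ i, ∑ j, c i j • (p i * x * p j)) * a ^ g k
      = ∑ i, ∑ j, (c i j * ∑ k ∈ S, α i ^ f k * α j ^ g k) • (p i * x * p j) := by
  simp only [mul_sum, sum_mul, sum_smul, mul_smul_comm, smul_mul_assoc,
    pow_mul_mul_mul_pow_of_eq_sum_smul hp ha, smul_smul]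
  rw [sum_comm]
  refine sum_congr rfl fun i _ => ?_
  rw [sum_comm]

end Spectral

theorem sum_mul_mul_sum_eq_of_sum_eq_one {ι M : Type*} [Fintype ι] [Semiring M] {p : ι → M}
    (hp : ∑ i, p i = 1) (x : M) : ∑ i, ∑ j, p i * x * p j = x := by
  simp only [← mul_sum, ← sum_mul, hp, one_mul, mul_one]

theorem stmt14_general {n d : ℕ}
    (A : Matrix (Fin n) (Fin n) ℝ)
    (α : Fin d → ℝ) (hαpos : ∀ i, 0 < α i) (hαinj : Function.Injective α)
    (P : Fin d → Matrix (Fin n) (Fin n) ℝ)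
    (hProj : ∀ i j, P i * P j = if i = j then P i else 0)
    (hPsum : ∑ i, P i = 1)
    (hspec : A = ∑ i, α i • P i)
    (m : ℕ) (hm : 1 ≤ m)
    (C : Matrix (Fin n) (Fin n) ℝ) :
    ∑ k ∈ Finset.Icc 1 m,
        A ^ (m - k) *
          (∑ i, ∑ j,
            (if i = j then 1 / (m * α i ^ (m - 1))
              else (α i - α j) / (α i ^ m - α j ^ m)) • (P i * C * P j)) *
          A ^ (k - 1)
      = C := by
  have hcoeff : ∀ i j, (if i = j then 1 / (m * α i ^ (m - 1))
      else (α i - α j) / (α i ^ m - α j ^ m)) *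
        ∑ k ∈ Icc 1 m, α i ^ (m - k) * α j ^ (k - 1) = 1 := by
    intro i j
    split_ifs with hij
    · subst hij
      exact one_div_mul_pow_mul_sum_Icc_pow_mul_pow (Nat.cast_ne_zero.mpr (by omega)) (hαpos i).ne'
    · refine sub_div_pow_sub_pow_mul_sum_Icc_pow_mul_pow fun h => hij (hαinj ?_)
      exact (pow_left_inj₀ (hαpos i).le (hαpos j).le (by omega)).mp h
  rw [sum_pow_mul_sum_smul_mul_pow_of_eq_sum_smul hProj hspec]
  simp only [hcoeff, one_smul]
  exact sum_mul_mul_sum_eq_of_sum_eq_one hPsum C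

theorem stmt14 {n d : ℕ}
    (A : Matrix (Fin n) (Fin n) ℝ) (hA : A.IsSymm)
    (α : Fin d → ℝ) (hαpos : ∀ i, 0 < α i) (hαinj : Function.Injective α)
    (P : Fin d → Matrix (Fin n) (Fin n) ℝ) (hPsymm : ∀ i, (P i).IsSymm)
    (hProj : ∀ i j, P i * P j = if i = j then P i else 0)
    (hPsum : ∑ i, P i = 1)
    (hspec : A = ∑ i, α i • P i)
    (m : ℕ) (hm : 1 ≤ m)
    (C : Matrix (Fin n) (Fin n) ℝ) :
    ∑ k ∈ Finset.Icc 1 m,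
        A ^ (m - k) *
          (∑ i, ∑ j,
            (if i = j then 1 / (m * α i ^ (m - 1))
              else (α i - α j) / (α i ^ m - α j ^ m)) • (P i * C * P j)) *
          A ^ (k - 1)
      = C :=
  stmt14_general A α hαpos hαinj P hProj hPsum hspec m hm C
end

section
/- For a positive definite symmetric matrix A with spectral projectors P_i and distinct eigenvalues α_i, the operator J(A) : X ↦ A X - X A and the operator J*(A) : X ↦ ∑_{i≠j} (α_i - α_j)^{-1} P_i X P_j satisfy the Moore–Penrose equations J J* J = J and J* J J* = J*. -/
/-!
Both `J(A)` and `J*(A)` act on the Peirce blocks `P i * X * P j` by scalars: `J(A)` by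
`α i - α j` and `J*(A)` by `(α i - α j)⁻¹`. Since the blocks of a complete family of orthogonal
idempotents multiply like matrix units, composing such operators multiplies the scalars
blockwise, and the Moore–Penrose equations reduce to `x * x⁻¹ * x = x` and
`x⁻¹ * x * x⁻¹ = x⁻¹` in `ℝ` (with `0⁻¹ = 0` on the diagonal blocks).
-/

open Finset

variable {R 𝕜 ι : Type*}

def blockScale [Fintype ι] [Semiring R] [SMul 𝕜 R] (P : ι → R) (c : ι → ι → 𝕜) (M : R) : R :=
  ∑ i, ∑ j, c i j • (P i * M * P j)

section Semiring

variable [Semiring R] [DecidableEq ι] {P : ι → R}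

theorem OrthogonalIdempotents.mul_mul_mul_mul_mul_eq_ite (hP : OrthogonalIdempotents P)
    (M : R) (i j k l : ι) :
    P i * (P k * M * P l) * P j = if i = k ∧ l = j then P i * M * P j else 0 := by
  have h : P i * (P k * M * P l) * P j = (P i * P k) * M * (P l * P j) := by
    simp only [mul_assoc]
  rw [h, hP.mul_eq, hP.mul_eq]
  by_cases hik : i = k <;> by_cases hlj : l = j <;> simp [hik, hlj]

variable [Fintype ι] [CommSemiring 𝕜] [Module 𝕜 R] [IsScalarTower 𝕜 R R] [SMulCommClass 𝕜 R R]

theorem OrthogonalIdempotents.mul_blockScale_mul (hP : OrthogonalIdempotents P)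
    (c : ι → ι → 𝕜) (M : R) (i j : ι) :
    P i * blockScale P c M * P j = c i j • (P i * M * P j) := by
  simp only [blockScale, mul_sum, sum_mul, mul_smul_comm, smul_mul_assoc,
    hP.mul_mul_mul_mul_mul_eq_ite, smul_ite, smul_zero, ite_and]
  simp

theorem OrthogonalIdempotents.blockScale_blockScale (hP : OrthogonalIdempotents P)
    (c c' : ι → ι → 𝕜) (M : R) :
    blockScale P c (blockScale P c' M) = blockScale P (c * c') M := by
  simp only [blockScale.eq_1 P c, hP.mul_blockScale_mul, smul_smul]
  rfl

end Semiring

theorem blockScale_eq_sum_erase [Fintype ι] [DecidableEq ι] [Semiring R] [Semiring 𝕜]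
    [Module 𝕜 R] (P : ι → R) {c : ι → ι → 𝕜} (hc : ∀ i, c i i = 0) (M : R) :
    blockScale P c M = ∑ i, ∑ j ∈ univ.erase i, c i j • (P i * M * P j) := by
  refine sum_congr rfl fun i _ => (sum_erase _ ?_).symm
  rw [hc, zero_smul]

theorem sum_smul_mul_sub_mul_sum_smul [Fintype ι] [Ring R] [CommRing 𝕜] [Module 𝕜 R]
    [IsScalarTower 𝕜 R R] [SMulCommClass 𝕜 R R] {P : ι → R} (hP : ∑ i, P i = 1) (α : ι → 𝕜) (M : R) :
    (∑ i, α i • P i) * M - M * ∑ i, α i • P i = blockScale P (fun i j => α i - α j) M := by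
  have hleft : (∑ i, α i • P i) * M = ∑ i, ∑ j, α i • (P i * M * P j) := by
    simp only [← smul_sum, ← mul_sum, hP, mul_one, sum_mul, smul_mul_assoc]
  have hright : M * (∑ i, α i • P i) = ∑ i, ∑ j, α j • (P i * M * P j) := by
    rw [sum_comm]
    simp only [mul_sum, mul_smul_comm, ← smul_sum, ← sum_mul, hP, one_mul]
  simp only [hleft, hright, blockScale, ← sum_sub_distrib, sub_smul]

theorem stmt16_general {n d : ℕ}
    (A : Matrix (Fin n) (Fin n) ℝ)
    (α : Fin d → ℝ)
    (P : Fin d → Matrix (Fin n) (Fin n) ℝ)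
    (hProj : ∀ i j, P i * P j = if i = j then P i else 0)
    (hPsum : ∑ i, P i = 1)
    (hspec : A = ∑ i, α i • P i) :
    (∀ X : Matrix (Fin n) (Fin n) ℝ,
      (A * (∑ i, ∑ j ∈ Finset.univ.erase i, (α i - α j)⁻¹ • (P i * (A * X - X * A) * P j))
        - (∑ i, ∑ j ∈ Finset.univ.erase i, (α i - α j)⁻¹ • (P i * (A * X - X * A) * P j)) * A)
        = A * X - X * A) ∧
    (∀ X : Matrix (Fin n) (Fin n) ℝ,
      (∑ i, ∑ j ∈ Finset.univ.erase i, (α i - α j)⁻¹ •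
          (P i * (A * (∑ i', ∑ j' ∈ Finset.univ.erase i', (α i' - α j')⁻¹ • (P i' * X * P j'))
            - (∑ i', ∑ j' ∈ Finset.univ.erase i', (α i' - α j')⁻¹ • (P i' * X * P j')) * A) * P j))
        = ∑ i, ∑ j ∈ Finset.univ.erase i, (α i - α j)⁻¹ • (P i * X * P j)) := by
  have hP : OrthogonalIdempotents P := OrthogonalIdempotents.iff_mul_eq.mpr hProj
  have hJ (M : Matrix (Fin n) (Fin n) ℝ) :
      A * M - M * A = blockScale P (fun i j => α i - α j) M :=
    hspec ▸ sum_smul_mul_sub_mul_sum_smul hPsum α M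
  have hJstar (M : Matrix (Fin n) (Fin n) ℝ) :
      ∑ i, ∑ j ∈ univ.erase i, (α i - α j)⁻¹ • (P i * M * P j)
        = blockScale P (fun i j => (α i - α j)⁻¹) M :=
    (blockScale_eq_sum_erase P (fun i => by rw [sub_self, inv_zero]) M).symm
  simp only [hJ, hJstar, hP.blockScale_blockScale]
  refine ⟨fun X => congrArg (blockScale P · X) ?_, fun X => congrArg (blockScale P · X) ?_⟩
  · funext i j
    simpa only [Pi.mul_apply, mul_assoc] using mul_inv_mul_cancel (α i - α j)
  · funext i j
    simpa only [Pi.mul_apply, inv_inv, mul_assoc] using mul_inv_mul_cancel (α i - α j)⁻¹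

theorem stmt16 {n d : ℕ}
    (A : Matrix (Fin n) (Fin n) ℝ) (hA : A.IsSymm)
    (α : Fin d → ℝ) (hαpos : ∀ i, 0 < α i) (hαinj : Function.Injective α)
    (P : Fin d → Matrix (Fin n) (Fin n) ℝ) (hPsymm : ∀ i, (P i).IsSymm)
    (hProj : ∀ i j, P i * P j = if i = j then P i else 0)
    (hPsum : ∑ i, P i = 1)
    (hspec : A = ∑ i, α i • P i) :
    (∀ X : Matrix (Fin n) (Fin n) ℝ,
      (A * (∑ i, ∑ j ∈ Finset.univ.erase i, (α i - α j)⁻¹ • (P i * (A * X - X * A) * P j))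
        - (∑ i, ∑ j ∈ Finset.univ.erase i, (α i - α j)⁻¹ • (P i * (A * X - X * A) * P j)) * A)
        = A * X - X * A) ∧
    (∀ X : Matrix (Fin n) (Fin n) ℝ,
      (∑ i, ∑ j ∈ Finset.univ.erase i, (α i - α j)⁻¹ •
          (P i * (A * (∑ i', ∑ j' ∈ Finset.univ.erase i', (α i' - α j')⁻¹ • (P i' * X * P j'))
            - (∑ i', ∑ j' ∈ Finset.univ.erase i', (α i' - α j')⁻¹ • (P i' * X * P j')) * A) * P j))
        = ∑ i, ∑ j ∈ Finset.univ.erase i, (α i - α j)⁻¹ • (P i * X * P j)) :=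
  stmt16_general A α P hProj hPsum hspec
end
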